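/- Let ĥ_i and h_j = ĥ_j + e_j be built from mutually independent complex Gaussian vectors, where ĥ_i has mean m_i with ‖m_i‖² = M·β_i·K_i/(K_i+1) and i.i.d. entries of variance v_i = β_i·η_i/(K_i+1), ĥ_j has mean m_j with ‖m_j‖² = M·β_j·K_j/(K_j+1) and i.i.d. entries of variance v_j = β_j·η_j/(K_j+1), and e_j has mean 0 and i.i.d. entries of variance σ_j² = β_j/((1+τ·p_p·β_j)(K_j+1)). Then exactly E{|ĥ_i^H h_j|²} = |m_i^H m_j|² + M·ξ_{ij}, where ξ_{ij} = (β_i·β_j/((K_i+1)(K_j+1)))·[ (K_i+η_i)/(1+τ·p_p·β_j) + K_j·η_i + K_i·η_j + η_i·η_j ]. This is the exact form of the approximation (44) and of the interference coefficients (25)–(26). -/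

import Mathlib

open MeasureTheory ProbabilityTheory

/-- `u^H w = ∑ₖ conj(uₖ) wₖ`. -/
noncomputable def dotH {M : ℕ} (u w : Fin M → ℂ) : ℂ :=
  ∑ k, (starRingEnd ℂ) (u k) * w k

/-- `‖u‖² = u^H u = ∑ₖ |uₖ|²`. -/
noncomputable def norm2 {M : ℕ} (u : Fin M → ℂ) : ℝ :=
  ∑ k, Complex.normSq (u k)

/-- A complex Gaussian random vector in `ℂ^M` with mean `m` and i.i.d. circularly
symmetric entries of variance `v`: `x = m + z` where the `2M` real random variables
`Re z₁, …, Re z_M, Im z₁, …, Im z_M` are mutually independent real Gaussian random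
variables each with mean `0` and variance `v/2`. -/
def IsComplexGaussianVec {Ω : Type*} [MeasurableSpace Ω] (μ : Measure Ω) (M : ℕ)
    (x : Ω → Fin M → ℂ) (m : Fin M → ℂ) (v : ℝ) : Prop :=
  (∀ k, Measurable fun ω => x ω k) ∧
  iIndepFun
    (Sum.elim (fun k ω => (x ω k - m k).re) (fun k ω => (x ω k - m k).im)) μ ∧
  (∀ k : Fin M, μ.map (fun ω => (x ω k - m k).re) = gaussianReal 0 (Real.toNNReal (v / 2))) ∧
  (∀ k : Fin M, μ.map (fun ω => (x ω k - m k).im) = gaussianReal 0 (Real.toNNReal (v / 2)))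


/-!
Only first and second moments enter. Both `ĥ_i` and `h_j = ĥ_j + e_j` have a mean and a scalar
covariance (`v_i • 1`, resp. `(v_j + σ_j²) • 1`, the latter because the two summands are
independent), and for independent `x`, `y` of this kind
`E|xᴴy|² = ∑ₖ ∑ₗ E[x̄ₖ xₗ] E[ȳₗ yₖ] = |m_xᴴ m_y|² + v_y ‖m_x‖² + v_x ‖m_y‖² + M v_x v_y`.
Since `v_j + σ_j² = β_j / (K_j + 1)`, this is `|m_iᴴ m_j|² + M ξ_ij`.
-/

open ComplexConjugate
open scoped NNReal

namespace ProbabilityTheory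

variable {Ω : Type*} [MeasurableSpace Ω] {μ : Measure Ω}

namespace HasLaw

variable {W : Ω → ℝ} {m : ℝ} {V : ℝ≥0}

lemma memLp_of_gaussianReal (hW : HasLaw W (gaussianReal m V) μ) (p : ℝ≥0) : MemLp W p μ := by
  have h := memLp_id_gaussianReal (μ := m) (v := V) p
  rw [← hW.map_eq] at h
  exact (memLp_map_measure_iff aestronglyMeasurable_id hW.aemeasurable).1 h

lemma integral_of_gaussianReal (hW : HasLaw W (gaussianReal m V) μ) : ∫ ω, W ω ∂μ = m := by
  rw [hW.integral_eq, integral_id_gaussianReal]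

lemma integral_sq_of_gaussianReal (hW : HasLaw W (gaussianReal 0 V) μ) :
    ∫ ω, W ω ^ 2 ∂μ = V := by
  rw [← variance_of_integral_eq_zero hW.aemeasurable hW.integral_of_gaussianReal, hW.variance_eq,
    variance_id_gaussianReal]

end HasLaw

lemma iIndepFun.integral_mul_eq_ite {ι : Type*} [DecidableEq ι] {W : ι → Ω → ℝ}
    (hind : iIndepFun W μ) (hmeas : ∀ i, AEStronglyMeasurable (W i) μ)
    (hmean : ∀ i, ∫ ω, W i ω ∂μ = 0) {σ2 : ℝ} (hsq : ∀ i, ∫ ω, W i ω ^ 2 ∂μ = σ2) (s t : ι) :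
    ∫ ω, W s ω * W t ω ∂μ = if s = t then σ2 else 0 := by
  split_ifs with hst
  · subst hst
    simp_rw [← sq, hsq]
  · rw [(hind.indepFun hst).integral_fun_mul_eq_mul_integral (hmeas s) (hmeas t)]
    simp [hmean]

end ProbabilityTheory

section

variable {Ω ι : Type*} [MeasurableSpace Ω] {μ : Measure Ω} [DecidableEq ι]

/-- Mean `m` and covariance `v • 1`, stated through the second moments `E[x̄ₖ xₗ]`. -/
structure HasIsotropicCov (μ : Measure Ω) (x : Ω → ι → ℂ) (m : ι → ℂ) (v : ℝ) : Prop where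
  memLp : ∀ k, MemLp (fun ω => x ω k) 2 μ
  integral_eq : ∀ k, ∫ ω, x ω k ∂μ = m k
  integral_conj_mul : ∀ k l,
    ∫ ω, conj (x ω k) * x ω l ∂μ = conj (m k) * m l + if k = l then (v : ℂ) else 0

namespace HasIsotropicCov

variable {x y : Ω → ι → ℂ} {mx my : ι → ℂ} {vx vy : ℝ}

lemma integrable_conj_mul (hx : HasIsotropicCov μ x mx vx) (hy : HasIsotropicCov μ y my vy)
    (k l : ι) : Integrable (fun ω => conj (x ω k) * y ω l) μ :=
  (hx.memLp k).star.integrable_mul (hy.memLp l)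

lemma const [IsProbabilityMeasure μ] (c : ι → ℂ) : HasIsotropicCov μ (fun _ => c) c 0 where
  memLp _ := memLp_const _
  integral_eq _ := by simp
  integral_conj_mul _ _ := by simp

lemma integral_conj_mul_of_indepFun (hx : HasIsotropicCov μ x mx vx)
    (hy : HasIsotropicCov μ y my vy) (hxy : IndepFun x y μ) (k l : ι) :
    ∫ ω, conj (x ω k) * y ω l ∂μ = conj (mx k) * my l := by
  have h : IndepFun (fun ω => conj (x ω k)) (fun ω => y ω l) μ :=
    hxy.comp (φ := fun a : ι → ℂ => conj (a k)) (ψ := fun b : ι → ℂ => b l) (by fun_prop)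
      (by fun_prop)
  rw [h.integral_fun_mul_eq_mul_integral (hx.memLp k).star.aestronglyMeasurable
    (hy.memLp l).aestronglyMeasurable, integral_conj, hx.integral_eq, hy.integral_eq]

lemma add [IsFiniteMeasure μ] (hx : HasIsotropicCov μ x mx vx) (hy : HasIsotropicCov μ y my vy)
    (hxy : IndepFun x y μ) : HasIsotropicCov μ (x + y) (mx + my) (vx + vy) where
  memLp k := (hx.memLp k).add (hy.memLp k)
  integral_eq k := by
    simp only [Pi.add_apply]
    rw [integral_add ((hx.memLp k).integrable one_le_two) ((hy.memLp k).integrable one_le_two),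
      hx.integral_eq, hy.integral_eq]
  integral_conj_mul k l := by
    have expand : ∀ ω, conj ((x + y) ω k) * (x + y) ω l
        = conj (x ω k) * x ω l + conj (x ω k) * y ω l
          + (conj (y ω k) * x ω l + conj (y ω k) * y ω l) := fun ω => by
      simp only [Pi.add_apply, map_add]; ring
    simp_rw [expand]
    rw [integral_add
        (by exact (hx.integrable_conj_mul hx k l).add (hx.integrable_conj_mul hy k l))
        (by exact (hy.integrable_conj_mul hx k l).add (hy.integrable_conj_mul hy k l)),
      integral_add (hx.integrable_conj_mul hx k l) (hx.integrable_conj_mul hy k l),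
      integral_add (hy.integrable_conj_mul hx k l) (hy.integrable_conj_mul hy k l),
      hx.integral_conj_mul, hy.integral_conj_mul, hx.integral_conj_mul_of_indepFun hy hxy,
      hy.integral_conj_mul_of_indepFun hx hxy.symm]
    split_ifs <;> simp only [Pi.add_apply, map_add, Complex.ofReal_add] <;> ring

end HasIsotropicCov

lemma HasIsotropicCov.of_uncorrelated_re_im [IsFiniteMeasure μ] {W : ι ⊕ ι → Ω → ℝ}
    (hW : ∀ s, MemLp (W s) 2 μ) (hmean : ∀ s, ∫ ω, W s ω ∂μ = 0) {σ2 : ℝ}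
    (hcov : ∀ s t, ∫ ω, W s ω * W t ω ∂μ = if s = t then σ2 else 0) :
    HasIsotropicCov μ (fun ω k => W (.inl k) ω + W (.inr k) ω * Complex.I) 0 (2 * σ2) := by
  have hint : ∀ s, Integrable (W s) μ := fun s => (hW s).integrable one_le_two
  have hprod : ∀ s t, Integrable (fun ω => W s ω * W t ω) μ := fun s t =>
    (hW s).integrable_mul (hW t)
  refine ⟨fun k => memLp_re_im_iff.1 ⟨by simpa using hW (.inl k), by simpa using hW (.inr k)⟩,
    fun k => ?_, fun k l => ?_⟩
  · rw [integral_add (hint (.inl k)).ofReal ((hint (.inr k)).ofReal.mul_const _),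
      integral_mul_const, integral_complex_ofReal, integral_complex_ofReal, hmean, hmean]
    simp
  · have hre : ∫ ω, W (.inl k) ω * W (.inl l) ω + W (.inr k) ω * W (.inr l) ω ∂μ
        = if k = l then 2 * σ2 else 0 := by
      rw [integral_add (hprod _ _) (hprod _ _), hcov, hcov]
      simp only [Sum.inl.injEq, Sum.inr.injEq]
      split_ifs <;> ring
    have him : ∫ ω, W (.inl k) ω * W (.inr l) ω - W (.inr k) ω * W (.inl l) ω ∂μ = 0 := by
      rw [integral_sub (hprod _ _) (hprod _ _), hcov, hcov]
      simp
    have hpoint : ∀ ω, conj (W (.inl k) ω + W (.inr k) ω * Complex.I)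
          * (W (.inl l) ω + W (.inr l) ω * Complex.I)
        = ((W (.inl k) ω * W (.inl l) ω + W (.inr k) ω * W (.inr l) ω : ℝ) : ℂ)
          + ((W (.inl k) ω * W (.inr l) ω - W (.inr k) ω * W (.inl l) ω : ℝ) : ℂ)
            * Complex.I := fun ω => by
      apply Complex.ext <;> simp
      ring
    simp_rw [hpoint]
    rw [integral_add (by exact ((hprod _ _).add (hprod _ _)).ofReal)
      (by exact (((hprod _ _).sub (hprod _ _)).ofReal).mul_const _), integral_mul_const,
      integral_complex_ofReal, integral_complex_ofReal, hre, him]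
    split_ifs <;> simp

namespace IsComplexGaussianVec

variable {M : ℕ} {x : Ω → Fin M → ℂ} {m : Fin M → ℂ} {v : ℝ}

lemma measurable (hx : IsComplexGaussianVec μ M x m v) : Measurable x :=
  measurable_pi_iff.2 hx.1

lemma hasIsotropicCov_sub [IsProbabilityMeasure μ] (hx : IsComplexGaussianVec μ M x m v)
    (hv : 0 ≤ v) : HasIsotropicCov μ (fun ω => x ω - m) 0 v := by
  set W : Fin M ⊕ Fin M → Ω → ℝ :=
    Sum.elim (fun k ω => (x ω k - m k).re) (fun k ω => (x ω k - m k).im)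
  have hlaw : ∀ s, HasLaw (W s) (gaussianReal 0 (v / 2).toNNReal) μ := by
    rintro (k | k)
    · exact ⟨(Complex.measurable_re.comp ((hx.1 k).sub_const _)).aemeasurable, hx.2.2.1 k⟩
    · exact ⟨(Complex.measurable_im.comp ((hx.1 k).sub_const _)).aemeasurable, hx.2.2.2 k⟩
  have hmemLp : ∀ s, MemLp (W s) 2 μ := fun s => (hlaw s).memLp_of_gaussianReal 2
  have hcov := hx.2.1.integral_mul_eq_ite (fun s => (hmemLp s).aestronglyMeasurable)
    (fun s => (hlaw s).integral_of_gaussianReal) (σ2 := v / 2) fun s => by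
      rw [(hlaw s).integral_sq_of_gaussianReal, Real.coe_toNNReal _ (by linarith)]
  convert HasIsotropicCov.of_uncorrelated_re_im hmemLp
    (fun s => (hlaw s).integral_of_gaussianReal) hcov using 1
  · ext ω k
    exact (Complex.re_add_im _).symm
  · ring

lemma hasIsotropicCov [IsProbabilityMeasure μ] (hx : IsComplexGaussianVec μ M x m v)
    (hv : 0 ≤ v) : HasIsotropicCov μ x m v := by
  convert (hx.hasIsotropicCov_sub hv).add (.const m) (indepFun_const_right _ m) using 1
  · ext ω k
    simp
  · simp
  · simp

end IsComplexGaussianVec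

lemma sum_sum_isotropic_moments {M : ℕ} (a b : Fin M → ℂ) (u w : ℝ) :
    ∑ k, ∑ l, (conj (a k) * a l + if k = l then (u : ℂ) else 0)
        * (conj (b l) * b k + if l = k then (w : ℂ) else 0)
      = ((‖dotH a b‖ ^ 2 + (w * norm2 a + u * norm2 b + M * u * w) : ℝ) : ℂ) := by
  have hterm : ∀ k l, (conj (a k) * a l + if k = l then (u : ℂ) else 0)
        * (conj (b l) * b k + if l = k then (w : ℂ) else 0)
      = (conj (a k) * b k) * conj (conj (a l) * b l)
        + if k = l then ((Complex.normSq (a k) * w + u * Complex.normSq (b k) + u * w : ℝ) : ℂ)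
          else 0 := by
    intro k l
    split_ifs with hkl hlk hlk
    · subst hkl
      simp only [map_mul, Complex.conj_conj, Complex.ofReal_add, Complex.ofReal_mul,
        Complex.normSq_eq_conj_mul_self]
      ring
    · exact absurd hkl.symm hlk
    · exact absurd hlk.symm hkl
    · simp only [map_mul, Complex.conj_conj]
      ring
  simp only [hterm, Finset.sum_add_distrib, Finset.sum_ite_eq, Finset.mem_univ, if_true,
    ← Finset.mul_sum, ← Finset.sum_mul, ← map_sum]
  rw [← dotH, Complex.mul_conj']
  push_cast [norm2, Finset.sum_add_distrib]
  simp only [Finset.sum_const, Finset.card_univ, Fintype.card_fin, nsmul_eq_mul, ← Finset.sum_mul,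
    ← Finset.mul_sum]
  ring

namespace HasIsotropicCov

variable {M : ℕ} {x y : Ω → Fin M → ℂ} {mx my : Fin M → ℂ} {vx vy : ℝ}

lemma integral_norm_dotH_sq (hx : HasIsotropicCov μ x mx vx) (hy : HasIsotropicCov μ y my vy)
    (hxy : IndepFun x y μ) :
    ∫ ω, ‖dotH (x ω) (y ω)‖ ^ 2 ∂μ
      = ‖dotH mx my‖ ^ 2 + (vy * norm2 mx + vx * norm2 my + M * vx * vy) := by
  have hexpand : ∀ ω, ((‖dotH (x ω) (y ω)‖ ^ 2 : ℝ) : ℂ)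
      = ∑ k, ∑ l, (conj (x ω k) * x ω l) * (conj (y ω l) * y ω k) := fun ω => by
    rw [Complex.ofReal_pow, ← Complex.mul_conj', dotH, map_sum, Finset.sum_mul_sum]
    refine Finset.sum_congr rfl fun k _ => Finset.sum_congr rfl fun l _ => ?_
    simp only [map_mul, Complex.conj_conj]
    ring
  have hindep : ∀ k l, IndepFun (fun ω => conj (x ω k) * x ω l)
      (fun ω => conj (y ω l) * y ω k) μ := fun k l =>
    hxy.comp (φ := fun a : Fin M → ℂ => conj (a k) * a l)
      (ψ := fun b : Fin M → ℂ => conj (b l) * b k) (by fun_prop) (by fun_prop)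
  have hint : ∀ k l, Integrable
      (fun ω => (conj (x ω k) * x ω l) * (conj (y ω l) * y ω k)) μ := fun k l =>
    (hindep k l).integrable_mul (hx.integrable_conj_mul hx k l) (hy.integrable_conj_mul hy l k)
  apply Complex.ofReal_injective
  rw [← integral_complex_ofReal]
  simp_rw [hexpand]
  rw [integral_finsetSum _ fun k _ => integrable_finsetSum _ fun l _ => hint k l]
  simp_rw [integral_finsetSum _ fun l _ => hint _ l]
  simp_rw [(hindep _ _).integral_fun_mul_eq_mul_integral
    (hx.integrable_conj_mul hx _ _).aestronglyMeasurable
    (hy.integrable_conj_mul hy _ _).aestronglyMeasurable, hx.integral_conj_mul,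
    hy.integral_conj_mul]
  exact sum_sum_isotropic_moments mx my vx vy

end HasIsotropicCov

end

/-- exact form of (44) and of the interference coefficients (25)–(26):
`E{|ĥ_i^H h_j|²} = |m_i^H m_j|² + M·ξ_{ij}`. -/
theorem expectation_abs_sq_cross_interference
    {Ω : Type*} [MeasurableSpace Ω] (μ : Measure Ω) [IsProbabilityMeasure μ]
    (M : ℕ) (βi βj Ki Kj τ pp : ℝ)
    (hβi : 0 < βi) (hβj : 0 < βj) (hKi : 0 ≤ Ki) (hKj : 0 ≤ Kj)
    (hτ : 0 < τ) (hpp : 0 < pp)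
    (ηi ηj vi vj σj2 ξij : ℝ)
    (hηi : ηi = τ * pp * βi / (1 + τ * pp * βi))
    (hηj : ηj = τ * pp * βj / (1 + τ * pp * βj))
    (hvi : vi = βi * ηi / (Ki + 1))
    (hvj : vj = βj * ηj / (Kj + 1))
    (hσj2 : σj2 = βj / ((1 + τ * pp * βj) * (Kj + 1)))
    (hξ : ξij = (βi * βj / ((Ki + 1) * (Kj + 1)))
        * ((Ki + ηi) / (1 + τ * pp * βj) + Kj * ηi + Ki * ηj + ηi * ηj))
    (hi hj ej h : Ω → Fin M → ℂ) (mi mj : Fin M → ℂ)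
    (hmi : norm2 mi = M * βi * Ki / (Ki + 1))
    (hmj : norm2 mj = M * βj * Kj / (Kj + 1))
    (hgi : IsComplexGaussianVec μ M hi mi vi)
    (hgj : IsComplexGaussianVec μ M hj mj vj)
    (hgej : IsComplexGaussianVec μ M ej 0 σj2)
    (hind : iIndepFun ![hi, hj, ej] μ)
    (hdef : ∀ ω, h ω = hj ω + ej ω) :
    ∫ ω, ‖dotH (hi ω) (h ω)‖ ^ 2 ∂μ
      = ‖dotH mi mj‖ ^ 2 + M * ξij := by
  obtain rfl : h = hj + ej := funext hdef
  have hvi0 : 0 ≤ vi := by rw [hvi, hηi]; positivity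
  have hvj0 : 0 ≤ vj := by rw [hvj, hηj]; positivity
  have hσj0 : 0 ≤ σj2 := by rw [hσj2]; positivity
  have hmeas : ∀ k, Measurable (![hi, hj, ej] k) := by
    intro k
    fin_cases k
    exacts [hgi.measurable, hgj.measurable, hgej.measurable]
  have hsum := (hgj.hasIsotropicCov hvj0).add (hgej.hasIsotropicCov hσj0)
    (hind.indepFun (i := 1) (j := 2) (by decide))
  have hindep : IndepFun hi (hj + ej) μ :=
    (hind.indepFun_prodMk hmeas 1 2 0 (by decide) (by decide)).symm.comp measurable_id
      (measurable_fst.add measurable_snd)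
  rw [(hgi.hasIsotropicCov hvi0).integral_norm_dotH_sq hsum hindep, add_zero, hmi, hmj, hξ, hvi,
    hvj, hσj2, hηj]
  field_simp
  ring
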